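/- For A_n: setting T_{k,β} = r^{ht(β)+1}(r²−1)·c where c = 1 if (α_k,β) = 1, c = 1 − r^{−2} if (α_k,β) = 0 and k ∈ Supp(β), c = 0 if k ∉ Supp(β) (with T_{k,α_k} = r⁴), satisfies all the Lawrence–Krammer equations of Table 1 for the root system of type A_n. -/

import Mathlib

/-!
In type `A` the positive roots are the `0`/`1`-vectors `α_i + ⋯ + α_j`. By induction on the height:
every positive root `β` has some `α_k` with `(α_k, β) > 0`, so either `β = α_k` or `(α_k, β) = 1`
and `β - α_k` is a positive root; and `(α_k, β) ≥ 2 β_k - 2` for `0`/`1`-vectors because `k` has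
at most two neighbours. Hence `(α_k, β) = 1` forces `β_k = 1` and `(α_k, β) = -1` forces
`β_k = 0`. With this, in each equation of Table 1 the hypotheses determine which case of the
definition of `T` applies to every term, and what remains is an identity of Laurent polynomials
in `r`.
-/

/-- The fundamental root `α_i`, written in coordinates with respect to the basis of
fundamental roots. -/
def esingle {n : ℕ} (i : Fin n) : Fin n → ℤ := Pi.single i 1

/-- A finite crystallographic simply-laced root system (type `A`, `D` or `E`),
given by the Gram matrix `C` of the fundamental roots `α_1, …, α_n` (all of squared
length 2):  `C i j = (α_i, α_j)`, which is `2` on the diagonal and `0` or `-1` off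
the diagonal, and is positive definite.  Roots are coordinatized in the root
lattice `ℤⁿ`; the inner product is `ip`, and the positive roots are exactly the
lattice vectors of squared length `2` with nonnegative coordinates. -/
structure ADE (n : ℕ) where
  C : Matrix (Fin n) (Fin n) ℤ
  symm : ∀ i j, C i j = C j i
  diag : ∀ i, C i i = 2
  offdiag : ∀ i j, i ≠ j → C i j = 0 ∨ C i j = -1
  posdef : ∀ v : Fin n → ℤ, v ≠ 0 → 0 < ∑ i, ∑ j, v i * C i j * v j

namespace ADE

variable {n : ℕ}

/-- The inner product `( , )` on the root lattice. -/
def ip (X : ADE n) (v w : Fin n → ℤ) : ℤ := ∑ i, ∑ j, v i * X.C i j * w j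

/-- The set `Φ⁺` of positive roots: the lattice vectors of squared length `2`
all of whose coordinates (with respect to the fundamental roots) are nonnegative. -/
def Pos (X : ADE n) : Set (Fin n → ℤ) :=
  {β | β ≠ 0 ∧ (∀ j, 0 ≤ β j) ∧ X.ip β β = 2}

/-- The height `ht(β)`: the sum of the coefficients of `β` with respect to the
fundamental roots. -/
def htZ (β : Fin n → ℤ) : ℤ := ∑ j, β j

end ADE

namespace ADE

variable {n : ℕ}

/-- The index type of the basis `{x_β : β ∈ Φ⁺}`. -/
abbrev PosIdx' (X : ADE n) := {β : Fin n → ℤ // β ∈ X.Pos}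

/-- The Lawrence–Krammer equations of Table 1 of Cohen–Wales for the coefficients
`T_{k,β}` (`β ∈ Φ⁺`), over a coefficient ring `A` with distinguished invertible
element `r` (with inverse `rinv`):
* `T_{k,α_l} = 0` for `k ≠ l`;
* `T_{k,α_k} = r⁴`;
* `T_{k,α_k+α_l} = r⁵ - r³` for adjacent `k, l`;
* `T_{k,β} = r T_{k,β-α_l}` if `(α_l,β) = 1` and `(α_k,α_l) = 0`;
* `T_{k,β} = T_{l,β-α_k-α_l} + (r - r⁻¹) T_{k,β-α_l}` if `(α_k,β) = 0`,
  `(α_l,β) = 1`, `(α_k,α_l) = -1`;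
* `T_{k,β} = r⁻¹ T_{l,β-α_l} + (r - r⁻¹) T_{k,β-α_l}` if `(α_k,β) = -1`,
  `(α_l,β) = 1`, `(α_k,α_l) = -1`;
* `T_{k,β} = r T_{l,β-α_k}` if `(α_k,β) = 1`, `(α_l,β) = 0`, `(α_k,α_l) = -1`. -/
def TableRels (X : ADE n) (A : Type) [CommRing A] (r rinv : A)
    (T : Fin n → ADE.PosIdx' X → A) : Prop :=
  (∀ (k l : Fin n), k ≠ l → ∀ b : ADE.PosIdx' X, b.1 = esingle l → T k b = 0) ∧
  (∀ (k : Fin n) (b : ADE.PosIdx' X), b.1 = esingle k → T k b = r ^ 4) ∧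
  (∀ (k l : Fin n) (b : ADE.PosIdx' X), X.ip (esingle k) (esingle l) = -1 →
      b.1 = esingle k + esingle l → T k b = r ^ 5 - r ^ 3) ∧
  (∀ (k l : Fin n) (b c : ADE.PosIdx' X), X.ip (esingle l) b.1 = 1 →
      X.ip (esingle k) (esingle l) = 0 → b.1 = c.1 + esingle l →
      T k b = r * T k c) ∧
  (∀ (k l : Fin n) (b c d : ADE.PosIdx' X), X.ip (esingle k) b.1 = 0 →
      X.ip (esingle l) b.1 = 1 → X.ip (esingle k) (esingle l) = -1 →
      b.1 = c.1 + esingle k + esingle l → b.1 = d.1 + esingle l →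
      T k b = T l c + (r - rinv) * T k d) ∧
  (∀ (k l : Fin n) (b c d : ADE.PosIdx' X), X.ip (esingle k) b.1 = -1 →
      X.ip (esingle l) b.1 = 1 → X.ip (esingle k) (esingle l) = -1 →
      b.1 = c.1 + esingle l → b.1 = d.1 + esingle l →
      T k b = rinv * T l c + (r - rinv) * T k d) ∧
  (∀ (k l : Fin n) (b c : ADE.PosIdx' X), X.ip (esingle k) b.1 = 1 →
      X.ip (esingle l) b.1 = 0 → X.ip (esingle k) (esingle l) = -1 →
      b.1 = c.1 + esingle k → T k b = r * T l c)

end ADE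

open scoped Classical in
open LaurentPolynomial in
/-- The explicit Lawrence–Krammer coefficients for type `A_n`:
`T_{k,β} = r^{ht(β)+1}(r²-1)·c` with `c = 1` if `(α_k,β) = 1`,
`c = 1 - r^{-2}` if `(α_k,β) = 0` and `k ∈ Supp(β)`, `c = 0` if `k ∉ Supp(β)`,
and `T_{k,α_k} = r⁴`. -/
noncomputable def TAn {n : ℕ} (X : ADE n) : Fin n → ADE.PosIdx' X → LaurentPolynomial ℤ :=
  fun k b =>
    if b.1 = esingle k then T 4
    else if X.ip (esingle k) b.1 = 1 then T (ADE.htZ b.1 + 1) * (T 2 - 1)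
    else if X.ip (esingle k) b.1 = 0 ∧ b.1 k ≠ 0 then
      T (ADE.htZ b.1 + 1) * (T 2 - 1) * (1 - T (-2))
    else 0

theorem esingle_apply_self {n : ℕ} (k : Fin n) : esingle k k = 1 := Pi.single_eq_same k 1

theorem esingle_apply_of_ne {n : ℕ} {j k : Fin n} (h : j ≠ k) : esingle k j = 0 :=
  Pi.single_eq_of_ne h 1

namespace ADE

variable {n : ℕ}

section Bilinear

variable (X : ADE n)

theorem ip_esingle_left (k : Fin n) (w : Fin n → ℤ) :
    X.ip (esingle k) w = ∑ j, X.C k j * w j := by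
  simp [ip, esingle, Pi.single_apply]

theorem ip_esingle_esingle (k l : Fin n) : X.ip (esingle k) (esingle l) = X.C k l := by
  rw [ip_esingle_left]
  simp [esingle, Pi.single_apply]

theorem ip_eq_sum_mul_ip_esingle (v w : Fin n → ℤ) :
    X.ip v w = ∑ k, v k * X.ip (esingle k) w := by
  simp only [ip_esingle_left]
  simp only [ip, Finset.mul_sum, mul_assoc]

theorem ip_add_right (v w u : Fin n → ℤ) : X.ip v (w + u) = X.ip v w + X.ip v u := by
  simp [ip, mul_add, Finset.sum_add_distrib]

theorem ip_sub_right (v w u : Fin n → ℤ) : X.ip v (w - u) = X.ip v w - X.ip v u := by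
  simp [ip, mul_sub, Finset.sum_sub_distrib]

theorem ip_sub_left (v w u : Fin n → ℤ) : X.ip (v - u) w = X.ip v w - X.ip u w := by
  simp [ip, sub_mul, Finset.sum_sub_distrib]

theorem ip_comm (v w : Fin n → ℤ) : X.ip v w = X.ip w v := by
  rw [ip, Finset.sum_comm]
  refine Finset.sum_congr rfl fun i _ => Finset.sum_congr rfl fun j _ => ?_
  rw [X.symm]
  ring

theorem ip_self_nonneg (v : Fin n → ℤ) : 0 ≤ X.ip v v := by
  rcases eq_or_ne v 0 with rfl | hv
  · simp [ip]
  · exact (X.posdef v hv).le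

theorem ip_esingle_le_two_mul {β : Fin n → ℤ} (hβ : ∀ j, 0 ≤ β j) (k : Fin n) :
    X.ip (esingle k) β ≤ 2 * β k := by
  rw [ip_esingle_left, ← Finset.add_sum_erase _ _ (Finset.mem_univ k), X.diag]
  have : ∑ j ∈ Finset.univ.erase k, X.C k j * β j ≤ 0 := by
    refine Finset.sum_nonpos fun j hj => ?_
    rcases X.offdiag k j (Finset.ne_of_mem_erase hj).symm with h | h <;> rw [h]
    · simp
    · linarith [hβ j]
  linarith

theorem ip_esingle_self (k : Fin n) : X.ip (esingle k) (esingle k) = 2 := by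
  rw [ip_esingle_esingle, X.diag]

theorem ne_of_ip_esingle_esingle_ne_two {k l : Fin n} (h : X.ip (esingle k) (esingle l) ≠ 2) :
    k ≠ l := by
  rintro rfl
  exact h (X.ip_esingle_self k)

theorem ne_esingle_of_ip_esingle_ne_two {k : Fin n} {β : Fin n → ℤ}
    (h : X.ip (esingle k) β ≠ 2) : β ≠ esingle k := by
  rintro rfl
  exact h (X.ip_esingle_self k)

end Bilinear

theorem htZ_add (u v : Fin n → ℤ) : htZ (u + v) = htZ u + htZ v := by
  simp [htZ, Finset.sum_add_distrib]

theorem htZ_esingle (k : Fin n) : htZ (esingle k) = 1 := by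
  simp [htZ, esingle]

section PositiveRoots

variable {X : ADE n} {β : Fin n → ℤ}

theorem ip_sub_esingle_self (hβ : β ∈ X.Pos) (k : Fin n) :
    X.ip (β - esingle k) (β - esingle k) = 4 - 2 * X.ip (esingle k) β := by
  rw [ip_sub_left, ip_sub_right, ip_sub_right, hβ.2.2, X.ip_comm β (esingle k),
    ip_esingle_esingle, X.diag]
  ring

theorem ip_esingle_le_two (hβ : β ∈ X.Pos) (k : Fin n) : X.ip (esingle k) β ≤ 2 := by
  linarith [X.ip_self_nonneg (β - esingle k), ip_sub_esingle_self hβ k]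

theorem eq_esingle_of_ip_esingle_eq_two (hβ : β ∈ X.Pos) {k : Fin n}
    (h : X.ip (esingle k) β = 2) : β = esingle k := by
  by_contra hne
  have : 0 < X.ip (β - esingle k) (β - esingle k) := X.posdef _ (sub_ne_zero.mpr hne)
  rw [ip_sub_esingle_self hβ, h] at this
  omega

theorem exists_ip_esingle_pos (hβ : β ∈ X.Pos) : ∃ k, 0 < X.ip (esingle k) β := by
  by_contra! h
  have : X.ip β β ≤ 0 := by
    rw [ip_eq_sum_mul_ip_esingle]
    exact Finset.sum_nonpos fun k _ => mul_nonpos_of_nonneg_of_nonpos (hβ.2.1 k) (h k)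
  linarith [hβ.2.2]

theorem sub_esingle_mem_Pos (hβ : β ∈ X.Pos) {k : Fin n} (h : X.ip (esingle k) β = 1) :
    β - esingle k ∈ X.Pos := by
  have hq : X.ip (β - esingle k) (β - esingle k) = 2 := by
    rw [ip_sub_esingle_self hβ, h]; norm_num
  refine ⟨fun h0 => by rw [h0] at hq; simp [ip] at hq, fun j => ?_, hq⟩
  have := X.ip_esingle_le_two_mul hβ.2.1 k
  rcases eq_or_ne j k with rfl | hjk
  · rw [Pi.sub_apply, esingle_apply_self]; omega
  · rw [Pi.sub_apply, esingle_apply_of_ne hjk, sub_zero]; exact hβ.2.1 j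

end PositiveRoots

def IsTypeA (X : ADE n) : Prop :=
  ∀ i j : Fin n, X.C i j =
    if i = j then 2 else if (i : ℕ) + 1 = (j : ℕ) ∨ (j : ℕ) + 1 = (i : ℕ) then -1 else 0

section TypeA

variable {X : ADE n}

theorem card_adjacent_le_two (k : Fin n) :
    (Finset.univ.filter fun j : Fin n => (k : ℕ) + 1 = j ∨ (j : ℕ) + 1 = k).card ≤ 2 := by
  rw [← Finset.card_map Fin.valEmbedding]
  refine (Finset.card_le_card (t := {(k : ℕ) + 1, (k : ℕ) - 1}) fun x hx => ?_).trans
    Finset.card_le_two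
  simp only [Finset.mem_map, Finset.mem_filter, Fin.valEmbedding_apply] at hx
  obtain ⟨j, ⟨-, hj⟩, rfl⟩ := hx
  simp only [Finset.mem_insert, Finset.mem_singleton]
  exact hj.imp (fun h => h.symm) (fun h => show (j : ℕ) = k - 1 by omega)

theorem two_mul_sub_two_le_ip_esingle (hA : X.IsTypeA) {β : Fin n → ℤ}
    (h1 : ∀ j, β j ≤ 1) (k : Fin n) : 2 * β k - 2 ≤ X.ip (esingle k) β := by
  have hterm : ∀ j, (if k = j then 2 * β k else 0) -
      (if (k : ℕ) + 1 = j ∨ (j : ℕ) + 1 = k then 1 else 0) ≤ X.C k j * β j := by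
    intro j
    rw [hA k j]
    split_ifs <;> subst_vars <;> first | omega | linarith [h1 j]
  have hsum := Finset.sum_le_sum fun j (_ : j ∈ Finset.univ) => hterm j
  rw [Finset.sum_sub_distrib, Finset.sum_ite_eq, Finset.sum_boole, ← ip_esingle_left] at hsum
  have := card_adjacent_le_two k
  simp only [Finset.mem_univ, if_true] at hsum
  omega

theorem apply_le_one_of_mem_Pos (hA : X.IsTypeA) {β : Fin n → ℤ} (hβ : β ∈ X.Pos) (j : Fin n) :
    β j ≤ 1 := by
  obtain ⟨k, hk⟩ := exists_ip_esingle_pos hβ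
  have := ip_esingle_le_two hβ k
  rcases (by omega : X.ip (esingle k) β = 1 ∨ X.ip (esingle k) β = 2) with h1 | h2
  · have hγ := sub_esingle_mem_Pos hβ h1
    have hht : htZ (β - esingle k) = htZ β - 1 := by
      rw [eq_sub_iff_add_eq, ← htZ_esingle k, ← htZ_add, sub_add_cancel]
    have hγ_nonneg : 0 ≤ htZ (β - esingle k) := Finset.sum_nonneg fun i _ => hγ.2.1 i
    have ih := apply_le_one_of_mem_Pos hA hγ
    rcases eq_or_ne j k with rfl | hjk
    · have hγj : X.ip (esingle j) (β - esingle j) = -1 := by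
        rw [ip_sub_right, h1, ip_esingle_esingle, X.diag]; norm_num
      have := two_mul_sub_two_le_ip_esingle hA ih j
      rw [hγj, Pi.sub_apply, esingle_apply_self] at this
      omega
    · have := ih j
      rwa [Pi.sub_apply, esingle_apply_of_ne hjk, sub_zero] at this
  · rw [eq_esingle_of_ip_esingle_eq_two hβ h2]
    rcases eq_or_ne j k with rfl | hjk
    · rw [esingle_apply_self]
    · rw [esingle_apply_of_ne hjk]; norm_num
termination_by (htZ β).toNat
decreasing_by omega

theorem apply_eq_one_of_ip_esingle_eq_one (hA : X.IsTypeA) {β : Fin n → ℤ} (hβ : β ∈ X.Pos)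
    {k : Fin n} (h : X.ip (esingle k) β = 1) : β k = 1 := by
  linarith [X.ip_esingle_le_two_mul hβ.2.1 k, apply_le_one_of_mem_Pos hA hβ k]

theorem apply_eq_zero_of_ip_esingle_eq_neg_one (hA : X.IsTypeA) {β : Fin n → ℤ} (hβ : β ∈ X.Pos)
    {k : Fin n} (h : X.ip (esingle k) β = -1) : β k = 0 := by
  linarith [two_mul_sub_two_le_ip_esingle hA (apply_le_one_of_mem_Pos hA hβ) k, hβ.2.1 k]

end TypeA

end ADE

section LawrenceKrammer

open LaurentPolynomial ADE

variable {n : ℕ} {X : ADE n}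

open scoped Classical in
/-- The factor `c` in `T_{k,β} = r^{ht(β)+1}(r² - 1)·c` for `β ≠ α_k`. -/
noncomputable def supportFactor (X : ADE n) (k : Fin n) (β : Fin n → ℤ) : LaurentPolynomial ℤ :=
  if X.ip (esingle k) β = 1 then 1 else if X.ip (esingle k) β = 0 ∧ β k ≠ 0 then 1 - T (-2) else 0

theorem TAn_of_ne_esingle {k : Fin n} {b : X.PosIdx'} (h : b.1 ≠ esingle k) :
    TAn X k b = T (htZ b.1 + 1) * (T 2 - 1) * supportFactor X k b.1 := by
  simp only [TAn, supportFactor, if_neg h]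
  split_ifs <;> ring

theorem TAn_of_ip_esingle_eq_one {k : Fin n} {b : X.PosIdx'} (h : X.ip (esingle k) b.1 = 1) :
    TAn X k b = T (htZ b.1 + 1) * (T 2 - 1) := by
  have hb : b.1 ≠ esingle k := X.ne_esingle_of_ip_esingle_ne_two (by omega)
  rw [TAn_of_ne_esingle hb, supportFactor, if_pos h, mul_one]

theorem TAn_of_ip_esingle_eq_zero {k : Fin n} {b : X.PosIdx'} (h : X.ip (esingle k) b.1 = 0)
    (hk : b.1 k ≠ 0) : TAn X k b = T (htZ b.1 + 1) * (T 2 - 1) * (1 - T (-2)) := by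
  have hb : b.1 ≠ esingle k := X.ne_esingle_of_ip_esingle_ne_two (by omega)
  rw [TAn_of_ne_esingle hb, supportFactor, if_neg (by omega), if_pos ⟨h, hk⟩]

theorem TAn_eq_zero_of_ip_esingle_neg {k : Fin n} {b : X.PosIdx'}
    (h : X.ip (esingle k) b.1 < 0) : TAn X k b = 0 := by
  have hb : b.1 ≠ esingle k := X.ne_esingle_of_ip_esingle_ne_two (by omega)
  rw [TAn_of_ne_esingle hb, supportFactor, if_neg (by omega), if_neg (by omega), mul_zero]

theorem TAn_eq_zero_of_apply_eq_zero {k : Fin n} {b : X.PosIdx'} (hk : b.1 k = 0) :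
    TAn X k b = 0 := by
  have := X.ip_esingle_le_two_mul b.2.2.1 k
  have hb : b.1 ≠ esingle k := X.ne_esingle_of_ip_esingle_ne_two (by omega)
  rw [TAn_of_ne_esingle hb, supportFactor, if_neg (by omega), if_neg (by omega), mul_zero]

theorem TAn_esingle_of_ne (k l : Fin n) (hkl : k ≠ l) (b : X.PosIdx') (hb : b.1 = esingle l) :
    TAn X k b = 0 :=
  TAn_eq_zero_of_apply_eq_zero (by rw [hb, esingle_apply_of_ne hkl])

theorem TAn_esingle_self (k : Fin n) (b : X.PosIdx') (hb : b.1 = esingle k) :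
    TAn X k b = T 1 ^ 4 := by
  simp [TAn, hb, T_pow]

theorem TAn_esingle_add_esingle (k l : Fin n) (b : X.PosIdx')
    (hkl : X.ip (esingle k) (esingle l) = -1) (hb : b.1 = esingle k + esingle l) :
    TAn X k b = T 1 ^ 5 - T 1 ^ 3 := by
  have hip : X.ip (esingle k) b.1 = 1 := by
    rw [hb, ip_add_right, hkl, ip_esingle_esingle, X.diag]; norm_num
  rw [TAn_of_ip_esingle_eq_one hip, hb, htZ_add, htZ_esingle, htZ_esingle, T_pow, T_pow, mul_sub,
    ← T_add]
  norm_num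

theorem TAn_add_esingle_of_ip_esingle_esingle_eq_zero (k l : Fin n) (b c : X.PosIdx')
    (hkl : X.ip (esingle k) (esingle l) = 0) (hb : b.1 = c.1 + esingle l) :
    TAn X k b = T 1 * TAn X k c := by
  have hkl' : k ≠ l := X.ne_of_ip_esingle_esingle_ne_two (by omega)
  have hip : X.ip (esingle k) b.1 = X.ip (esingle k) c.1 := by rw [hb, ip_add_right, hkl, add_zero]
  have hk : b.1 k = c.1 k := by rw [hb, Pi.add_apply, esingle_apply_of_ne hkl', add_zero]
  have hbk : b.1 ≠ esingle k := fun h => by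
    have := congrFun hb l
    rw [h, Pi.add_apply, esingle_apply_of_ne (Ne.symm hkl'), esingle_apply_self] at this
    linarith [c.2.2.1 l]
  have hck : c.1 ≠ esingle k :=
    X.ne_esingle_of_ip_esingle_ne_two fun h => hbk (eq_esingle_of_ip_esingle_eq_two b.2 (hip ▸ h))
  have hht : htZ b.1 = htZ c.1 + 1 := by rw [hb, htZ_add, htZ_esingle]
  rw [TAn_of_ne_esingle hbk, TAn_of_ne_esingle hck, supportFactor, supportFactor, hip, hk, hht,
    T_add (htZ c.1 + 1) 1]
  ring

theorem TAn_eq_add_of_ip_esingle_eq_zero (hA : X.IsTypeA) (k l : Fin n) (b c d : X.PosIdx')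
    (h0 : X.ip (esingle k) b.1 = 0) (h1 : X.ip (esingle l) b.1 = 1)
    (hkl : X.ip (esingle k) (esingle l) = -1) (hc : b.1 = c.1 + esingle k + esingle l)
    (hd : b.1 = d.1 + esingle l) : TAn X k b = TAn X l c + (T 1 - T (-1)) * TAn X k d := by
  have hkl' : k ≠ l := X.ne_of_ip_esingle_esingle_ne_two (by omega)
  have hbk : b.1 k ≠ 0 := by
    rw [hc, Pi.add_apply, Pi.add_apply, esingle_apply_self, esingle_apply_of_ne hkl']
    linarith [c.2.2.1 k]
  have hcl : c.1 l = 0 := by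
    have := apply_eq_one_of_ip_esingle_eq_one hA b.2 h1
    rw [hc, Pi.add_apply, Pi.add_apply, esingle_apply_of_ne (Ne.symm hkl'), esingle_apply_self]
      at this
    omega
  have hdk : X.ip (esingle k) d.1 = 1 := by
    have : X.ip (esingle k) b.1 = X.ip (esingle k) d.1 + X.ip (esingle k) (esingle l) := by
      rw [hd, ip_add_right]
    omega
  have hht : htZ b.1 = htZ d.1 + 1 := by rw [hd, htZ_add, htZ_esingle]
  rw [TAn_of_ip_esingle_eq_zero h0 hbk, TAn_eq_zero_of_apply_eq_zero hcl,
    TAn_of_ip_esingle_eq_one hdk, hht, T_add (htZ d.1 + 1) 1]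
  have hT2 : (T 2 : LaurentPolynomial ℤ) = T 1 * T 1 := by rw [← T_add]; norm_num
  have hTm2 : (T (-2) : LaurentPolynomial ℤ) = T (-1) * T (-1) := by rw [← T_add]; norm_num
  have hinv : (T 1 : LaurentPolynomial ℤ) * T (-1) = 1 := by rw [← T_add]; norm_num
  rw [hT2, hTm2]
  linear_combination (-(T (htZ d.1 + 1) * (T 1 * T 1 - 1) * T (-1))) * hinv

theorem TAn_eq_add_of_ip_esingle_eq_neg_one (hA : X.IsTypeA) (k l : Fin n) (b c d : X.PosIdx')
    (hk : X.ip (esingle k) b.1 = -1) (hl : X.ip (esingle l) b.1 = 1)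
    (hkl : X.ip (esingle k) (esingle l) = -1) (hc : b.1 = c.1 + esingle l)
    (hd : b.1 = d.1 + esingle l) :
    TAn X k b = T (-1) * TAn X l c + (T 1 - T (-1)) * TAn X k d := by
  have hkl' : k ≠ l := X.ne_of_ip_esingle_esingle_ne_two (by omega)
  have hlc : X.ip (esingle l) c.1 = -1 := by
    rw [hc, ip_add_right, ip_esingle_self] at hl
    omega
  have hdk : d.1 k = 0 := by
    have := apply_eq_zero_of_ip_esingle_eq_neg_one hA b.2 hk
    rwa [hd, Pi.add_apply, esingle_apply_of_ne hkl', add_zero] at this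
  rw [TAn_eq_zero_of_ip_esingle_neg (by omega), TAn_eq_zero_of_ip_esingle_neg (by omega),
    TAn_eq_zero_of_apply_eq_zero hdk]
  ring

theorem TAn_eq_mul_of_ip_esingle_eq_one (k l : Fin n) (b c : X.PosIdx')
    (hk : X.ip (esingle k) b.1 = 1) (hl : X.ip (esingle l) b.1 = 0)
    (hkl : X.ip (esingle k) (esingle l) = -1) (hc : b.1 = c.1 + esingle k) :
    TAn X k b = T 1 * TAn X l c := by
  have hlc : X.ip (esingle l) c.1 = 1 := by
    rw [hc, ip_add_right, X.ip_comm (esingle l) (esingle k), hkl] at hl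
    omega
  have hht : htZ b.1 = htZ c.1 + 1 := by rw [hc, htZ_add, htZ_esingle]
  rw [TAn_of_ip_esingle_eq_one hk, TAn_of_ip_esingle_eq_one hlc, hht, T_add (htZ c.1 + 1) 1]
  ring

end LawrenceKrammer

open LaurentPolynomial in
/-- For the root system of type `A_n`, the explicit coefficients `TAn` satisfy all
the Lawrence–Krammer equations of Table 1. -/
theorem tAn_satisfies_table {n : ℕ} (X : ADE n)
    (hC : ∀ i j : Fin n, X.C i j =
      if i = j then 2 else if (i : ℕ) + 1 = (j : ℕ) ∨ (j : ℕ) + 1 = (i : ℕ) then -1 else 0) :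
    ADE.TableRels X (LaurentPolynomial ℤ) (T 1) (T (-1)) (TAn X) :=
  ⟨TAn_esingle_of_ne, TAn_esingle_self, TAn_esingle_add_esingle,
    fun k l b c _ => TAn_add_esingle_of_ip_esingle_esingle_eq_zero k l b c,
    TAn_eq_add_of_ip_esingle_eq_zero hC,
    TAn_eq_add_of_ip_esingle_eq_neg_one hC, TAn_eq_mul_of_ip_esingle_eq_one⟩
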